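/- arXiv:1304.6368 — 4 statements merged into one kernel-verified Lean document; each statement's English description precedes it below -/
import Mathlib

section
/- For every finite-dimensional real vector space V and every nonzero v ∈ λ(V), the isomorphism P : λ(V*) → λ(V)* satisfies P(v*) = (P v)*, where for a nonzero element w of a 1-dimensional space L, w* denotes the element of L* with w*(w) = 1, and where λ(V*) is identified with (λ(V))** via the double-dual; equivalently, P applied to the dual generator of v under the canonical pairing gives the dual of P(v). -/
open Module Function

noncomputable section

/-- The wedge `v 0 ∧ ... ∧ v (n-1)` as an element of the `n`-th exterior power. -/
def wedge {V : Type*} [AddCommGroup V] [Module ℝ V] (n : ℕ) (v : Fin n → V) :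
    ⋀[ℝ]^n V :=
  ⟨ExteriorAlgebra.ιMulti ℝ n v, ExteriorAlgebra.ιMulti_range ℝ n ⟨v, rfl⟩⟩

/-- `P : λ(V*) → λ(V)*` satisfies the determinant formula
`P(α_1 ∧ ... ∧ α_n)(v_1 ∧ ... ∧ v_n) = (-1)^{n choose 2} det (α_i (v_j))`. -/
def IsDetPairing {V : Type*} [AddCommGroup V] [Module ℝ V] (n : ℕ)
    (P : (⋀[ℝ]^n (Module.Dual ℝ V)) →ₗ[ℝ] Module.Dual ℝ (⋀[ℝ]^n V)) : Prop :=
  ∀ (α : Fin n → Module.Dual ℝ V) (v : Fin n → V),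
    P (wedge n α) (wedge n v) =
      (-1 : ℝ) ^ (n.choose 2) * Matrix.det (Matrix.of fun a b => α a (v b))

lemma alt_eq_det_smul {W N : Type*} [AddCommGroup W] [Module ℝ W] [AddCommGroup N] [Module ℝ N]
    {n : ℕ} (b : Basis (Fin n) ℝ W) (f : W [⋀^Fin n]→ₗ[ℝ] N) (v : Fin n → W) :
    f v = b.det v • f ⇑b := by
  have h : f = (LinearMap.toSpanSingleton ℝ N (f ⇑b)).compAlternatingMap b.det := by
    refine Basis.ext_alternating b fun i hi => ?_
    have hbij : Function.Bijective i := Finite.injective_iff_bijective.1 hi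
    let σ : Equiv.Perm (Fin n) := Equiv.ofBijective i hbij
    have h1 : (fun j => b (i j)) = ⇑b ∘ σ := rfl
    rw [h1]
    simp [AlternatingMap.map_perm, Basis.det_self, LinearMap.toSpanSingleton_apply]
  conv_lhs => rw [h]
  simp [LinearMap.toSpanSingleton_apply]

lemma wedge_eq_det_smul {W : Type*} [AddCommGroup W] [Module ℝ W]
    {n : ℕ} (b : Basis (Fin n) ℝ W) (v : Fin n → W) :
    wedge n v = b.det v • wedge n ⇑b := by
  apply Subtype.ext
  simpa [wedge] using alt_eq_det_smul b (ExteriorAlgebra.ιMulti ℝ n) v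

lemma exists_smul_wedge {W : Type*} [AddCommGroup W] [Module ℝ W]
    {n : ℕ} (b : Basis (Fin n) ℝ W) (x : ⋀[ℝ]^n W) :
    ∃ c : ℝ, x = c • wedge n ⇑b := by
  obtain ⟨x, hx⟩ := x
  rw [← ExteriorAlgebra.ιMulti_span_fixedDegree] at hx
  have hle : Submodule.span ℝ (Set.range (ExteriorAlgebra.ιMulti ℝ n (M := W))) ≤
      Submodule.span ℝ {ExteriorAlgebra.ιMulti ℝ n ⇑b} := by
    rw [Submodule.span_le]
    rintro _ ⟨u, rfl⟩
    have := alt_eq_det_smul b (ExteriorAlgebra.ιMulti ℝ n) u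
    rw [this]
    exact Submodule.smul_mem _ _ (Submodule.mem_span_singleton_self _)
  obtain ⟨c, hc⟩ := Submodule.mem_span_singleton.1 (hle hx)
  exact ⟨c, Subtype.ext (by simpa [wedge] using hc.symm)⟩

/-- `𝒫(v^*) = (𝒫 v)^*`:  let `P : λ(V*) ≅ λ(V)*` and `P' : λ(V**) ≅ λ(V*)*` be the
canonical determinant pairings, and let `Lev : λ(V) → λ(V**)` be induced by the
double-dual embedding (identifying `λ(V*)`'s dual data with `(λ V)**`).  For a nonzero
`v ∈ λ(V)` with dual generator `vd` (i.e. `vd v = 1`), set `w := P⁻¹(vd) ∈ λ(V*)`; then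
`P'` applied to (the double-dual image of) `v` is exactly the dual generator `wd` of `w`. -/
theorem detPairing_dual_generator {V : Type*} [AddCommGroup V] [Module ℝ V]
    [FiniteDimensional ℝ V]
    (P : (⋀[ℝ]^(finrank ℝ V) (Module.Dual ℝ V)) ≃ₗ[ℝ]
      Module.Dual ℝ (⋀[ℝ]^(finrank ℝ V) V))
    (hP : IsDetPairing (finrank ℝ V) P.toLinearMap)
    (P' : (⋀[ℝ]^(finrank ℝ V) (Module.Dual ℝ (Module.Dual ℝ V))) ≃ₗ[ℝ]
      Module.Dual ℝ (⋀[ℝ]^(finrank ℝ V) (Module.Dual ℝ V)))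
    (hP' : IsDetPairing (finrank ℝ V) P'.toLinearMap)
    (Lev : (⋀[ℝ]^(finrank ℝ V) V) →ₗ[ℝ]
      ⋀[ℝ]^(finrank ℝ V) (Module.Dual ℝ (Module.Dual ℝ V)))
    (hLev : ∀ u : Fin (finrank ℝ V) → V,
      Lev (wedge (finrank ℝ V) u) = wedge (finrank ℝ V) (Module.Dual.eval ℝ V ∘ u))
    (v : ⋀[ℝ]^(finrank ℝ V) V) (hv : v ≠ 0)
    (vd : Module.Dual ℝ (⋀[ℝ]^(finrank ℝ V) V)) (hvd : vd v = 1)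
    (wd : Module.Dual ℝ (⋀[ℝ]^(finrank ℝ V) (Module.Dual ℝ V)))
    (hwd : wd (P.symm vd) = 1) :
    P' (Lev v) = wd := by
  classical
  let b : Basis (Fin (finrank ℝ V)) ℝ V := Module.finBasis ℝ V
  let ε : Basis (Fin (finrank ℝ V)) ℝ (Module.Dual ℝ V) := b.dualBasis
  set s : ℝ := (-1 : ℝ) ^ ((finrank ℝ V).choose 2) with hs
  have hmat1 : (Matrix.of fun a c => ε a (b c)) = (1 : Matrix (Fin (finrank ℝ V)) (Fin (finrank ℝ V)) ℝ) := by
    ext a c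
    rw [Matrix.of_apply, Basis.dualBasis_apply_self, Matrix.one_apply]
    simp [eq_comm]
  have h1 : P (wedge (finrank ℝ V) ⇑ε) (wedge (finrank ℝ V) ⇑b) = s := by
    have := hP ⇑ε ⇑b
    rw [LinearEquiv.coe_coe] at this
    rw [this, hmat1, Matrix.det_one, mul_one]
  have hmat2 : (Matrix.of fun a c => (⇑(Module.Dual.eval ℝ V) ∘ ⇑b) a (ε c)) =
      (1 : Matrix (Fin (finrank ℝ V)) (Fin (finrank ℝ V)) ℝ) := by
    ext a c
    rw [Matrix.of_apply, Function.comp_apply, Module.Dual.eval_apply,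
      Basis.dualBasis_apply_self, Matrix.one_apply]
  have h2 : P' (wedge (finrank ℝ V) (⇑(Module.Dual.eval ℝ V) ∘ ⇑b)) (wedge (finrank ℝ V) ⇑ε) = s := by
    have := hP' (⇑(Module.Dual.eval ℝ V) ∘ ⇑b) ⇑ε
    rw [LinearEquiv.coe_coe] at this
    rw [this, hmat2, Matrix.det_one, mul_one]
  obtain ⟨c, hc⟩ := exists_smul_wedge b v
  obtain ⟨d, hd⟩ := exists_smul_wedge ε (P.symm vd)
  have hvd' : vd = d • P (wedge (finrank ℝ V) ⇑ε) := by
    have h := congrArg (⇑P) hd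
    rwa [P.apply_symm_apply, P.map_smul] at h
  have hcds : c * (d * s) = 1 := by
    rw [hc] at hvd
    rw [hvd'] at hvd
    rw [LinearMap.smul_apply, LinearMap.map_smul] at hvd
    rw [h1] at hvd
    simpa [smul_eq_mul, mul_comm, mul_left_comm] using hvd
  have hdw : d * wd (wedge (finrank ℝ V) ⇑ε) = 1 := by
    rw [hd, wd.map_smul] at hwd
    simpa [smul_eq_mul] using hwd
  have hkey : wd (wedge (finrank ℝ V) ⇑ε) = c * s :=
    calc wd (wedge (finrank ℝ V) ⇑ε)
        = (c * (d * s)) * wd (wedge (finrank ℝ V) ⇑ε) := by rw [hcds, one_mul]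
      _ = (c * s) * (d * wd (wedge (finrank ℝ V) ⇑ε)) := by ring
      _ = c * s := by rw [hdw, mul_one]
  have hLHS : (P' (Lev v)) (wedge (finrank ℝ V) ⇑ε) = c * s := by
    rw [hc, Lev.map_smul, hLev, P'.map_smul, LinearMap.smul_apply, h2, smul_eq_mul]
  apply LinearMap.ext
  intro x
  obtain ⟨t, ht⟩ := exists_smul_wedge ε x
  rw [ht, (P' (Lev v)).map_smul, wd.map_smul, hkey, hLHS]
end
end

section
/- For every commutative 3×3 grid of finite-dimensional real vector spaces with all three rows and all three columns short exact, the square of isomorphisms relating λ(V_TL) ⊗ λ(V_BL) ⊗ λ(V_TR) ⊗ λ(V_BR) to λ(V_CM), obtained by first combining columns and then the middle row versus first combining rows (after the graded swap R of the middle two factors, introducing the sign (-1)^{dim V_BL · dim V_TR}) and then the middle column, commutes. -/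
open Module TensorProduct Function

noncomputable section

/-- `Φ` realizes the canonical isomorphism `λ(V') ⊗ λ(V'') ≅ λ(V)` attached to a short
exact sequence `0 → V' →ⁱ V →ʲ V'' → 0`. -/
def IsSESWedge {V' V V'' : Type*} [AddCommGroup V'] [Module ℝ V'] [AddCommGroup V]
    [Module ℝ V] [AddCommGroup V''] [Module ℝ V'']
    (k l n : ℕ) (hn : n = k + l) (i : V' →ₗ[ℝ] V) (j : V →ₗ[ℝ] V'')
    (Φ : ((⋀[ℝ]^k V') ⊗[ℝ] (⋀[ℝ]^l V'')) →ₗ[ℝ] ⋀[ℝ]^n V) : Prop :=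
  ∀ (v' : Fin k → V') (v : Fin l → V),
    LinearIndependent ℝ v' → LinearIndependent ℝ (j ∘ v) →
      Φ (wedge k v' ⊗ₜ[ℝ] wedge l (j ∘ v)) =
        wedge n (Fin.append (i ∘ v') v ∘ Fin.cast hn)


namespace SESWedgeAux

open ExteriorAlgebra

lemma myComp_append {α β : Type*} (f : α → β) {k l : ℕ} (u : Fin k → α) (v : Fin l → α) :
    f ∘ Fin.append u v = Fin.append (f ∘ u) (f ∘ v) := by
  funext m
  refine Fin.addCases (fun p => ?_) (fun q => ?_) m <;> simp

lemma ιMulti_cast {V : Type*} [AddCommGroup V] [Module ℝ V] {n m : ℕ} (h : n = m)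
    (f : Fin m → V) :
    ιMulti ℝ n (f ∘ Fin.cast h) = ιMulti ℝ m f := by
  subst h; rfl

lemma ιMulti_append {V : Type*} [AddCommGroup V] [Module ℝ V] {k l : ℕ}
    (u : Fin k → V) (v : Fin l → V) :
    ιMulti ℝ (k + l) (Fin.append u v) = ιMulti ℝ k u * ιMulti ℝ l v := by
  rw [ιMulti_apply, ιMulti_apply, ιMulti_apply, ← List.prod_append, ← List.ofFn_fin_append]
  exact congrArg List.prod (congrArg List.ofFn (myComp_append (ι ℝ) u v))

lemma ι_mul_ιMulti {V : Type*} [AddCommGroup V] [Module ℝ V] (x : V) (l : ℕ) (v : Fin l → V) :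
    ι ℝ x * ιMulti ℝ l v = ((-1 : ℝ) ^ l) • (ιMulti ℝ l v * ι ℝ x) := by
  induction l with
  | zero => simp
  | succ l ih =>
    rw [ιMulti_succ_apply]
    have hswap : ι ℝ x * ι ℝ (v 0) = -(ι ℝ (v 0) * ι ℝ x) :=
      eq_neg_of_add_eq_zero_left (ι_add_mul_swap x (v 0))
    calc ι ℝ x * (ι ℝ (v 0) * ιMulti ℝ l (Matrix.vecTail v))
        = (ι ℝ x * ι ℝ (v 0)) * ιMulti ℝ l (Matrix.vecTail v) := by rw [mul_assoc]
      _ = -(ι ℝ (v 0) * (ι ℝ x * ιMulti ℝ l (Matrix.vecTail v))) := by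
          rw [hswap, neg_mul, mul_assoc]
      _ = -(ι ℝ (v 0) * (((-1 : ℝ) ^ l) • (ιMulti ℝ l (Matrix.vecTail v) * ι ℝ x))) := by
          rw [ih]
      _ = ((-1 : ℝ) ^ (l + 1)) • (ι ℝ (v 0) * ιMulti ℝ l (Matrix.vecTail v) * ι ℝ x) := by
          rw [mul_smul_comm, pow_succ, ← neg_smul, mul_assoc]
          ring_nf

lemma ιMulti_mul_comm {V : Type*} [AddCommGroup V] [Module ℝ V] {k l : ℕ}
    (u : Fin k → V) (v : Fin l → V) :
    ιMulti ℝ k u * ιMulti ℝ l v = ((-1 : ℝ) ^ (k * l)) • (ιMulti ℝ l v * ιMulti ℝ k u) := by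
  induction k with
  | zero => simp
  | succ k ih =>
    calc ιMulti ℝ (k + 1) u * ιMulti ℝ l v
        = ι ℝ (u 0) * (ιMulti ℝ k (Matrix.vecTail u) * ιMulti ℝ l v) := by
          rw [ιMulti_succ_apply, mul_assoc]
      _ = ((-1 : ℝ) ^ (k * l)) • ((ι ℝ (u 0) * ιMulti ℝ l v) * ιMulti ℝ k (Matrix.vecTail u)) := by
          rw [ih, mul_smul_comm, ← mul_assoc]
      _ = ((-1 : ℝ) ^ (k * l)) • (((-1 : ℝ) ^ l) •
            ((ιMulti ℝ l v * ι ℝ (u 0)) * ιMulti ℝ k (Matrix.vecTail u))) := by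
          rw [ι_mul_ιMulti, smul_mul_assoc]
      _ = ((-1 : ℝ) ^ ((k + 1) * l)) • (ιMulti ℝ l v * ιMulti ℝ (k + 1) u) := by
          rw [smul_smul, ← pow_add, ιMulti_succ_apply, mul_assoc]
          congr 2
          ring

lemma li_append {V' V V'' : Type*} [AddCommGroup V'] [Module ℝ V'] [AddCommGroup V]
    [Module ℝ V] [AddCommGroup V''] [Module ℝ V'']
    {i : V' →ₗ[ℝ] V} {j : V →ₗ[ℝ] V''} (hi : Function.Injective i)
    (hex : LinearMap.range i = LinearMap.ker j) {k l : ℕ} {v' : Fin k → V'} {v : Fin l → V}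
    (h1 : LinearIndependent ℝ v') (h2 : LinearIndependent ℝ (⇑j ∘ v)) :
    LinearIndependent ℝ (Fin.append (⇑i ∘ v') v) := by
  rw [Fintype.linearIndependent_iff]
  intro g hg
  rw [Fin.sum_univ_add] at hg
  simp only [Fin.append_left, Fin.append_right, Function.comp_apply] at hg
  have hji : ∀ p : Fin k, j (i (v' p)) = 0 := fun p => by
    have : i (v' p) ∈ LinearMap.ker j := hex ▸ LinearMap.mem_range_self i (v' p)
    exact this
  have hq : ∀ q : Fin l, g (Fin.natAdd k q) = 0 := by
    have hj0 : ∑ q : Fin l, g (Fin.natAdd k q) • (⇑j ∘ v) q = 0 := by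
      have := congrArg j hg
      simpa [map_add, map_sum, map_smul, hji] using this
    exact Fintype.linearIndependent_iff.mp h2 _ hj0
  have hp : ∀ p : Fin k, g (Fin.castAdd l p) = 0 := by
    have hsum : ∑ p : Fin k, g (Fin.castAdd l p) • i (v' p) = 0 := by
      simpa [hq] using hg
    have : i (∑ p : Fin k, g (Fin.castAdd l p) • v' p) = 0 := by
      simpa [map_sum, map_smul] using hsum
    have h0 : ∑ p : Fin k, g (Fin.castAdd l p) • v' p = 0 := by
      apply hi
      simpa using this
    exact Fintype.linearIndependent_iff.mp h1 _ h0
  intro m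
  refine Fin.addCases (fun p => hp p) (fun q => hq q) m

lemma top_wedge_span {V : Type*} [AddCommGroup V] [Module ℝ V] [FiniteDimensional ℝ V]
    (x : ⋀[ℝ]^(finrank ℝ V) V) :
    ∃ c : ℝ, x = c • wedge (finrank ℝ V) ⇑(finBasis ℝ V) := by
  have key : ∀ v : Fin (finrank ℝ V) → V,
      ιMulti ℝ (finrank ℝ V) v
        = (finBasis ℝ V).det v • ιMulti ℝ (finrank ℝ V) ⇑(finBasis ℝ V) := by
    intro v
    rw [← sub_eq_zero, ← Module.forall_dual_apply_eq_zero_iff ℝ]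
    intro φ
    have h := (φ.compAlternatingMap (ιMulti ℝ (finrank ℝ V))).eq_smul_basis_det (finBasis ℝ V)
    have h2 := congrArg (fun f : V [⋀^Fin (finrank ℝ V)]→ₗ[ℝ] ℝ => f v) h
    simp only [LinearMap.compAlternatingMap_apply, AlternatingMap.smul_apply,
      smul_eq_mul] at h2
    rw [map_sub, map_smul, h2, smul_eq_mul, mul_comm, sub_self]
  have hx : (x : ExteriorAlgebra ℝ V) ∈
      Submodule.span ℝ (Set.range (ιMulti ℝ (finrank ℝ V))) := by
    rw [ιMulti_span_fixedDegree]; exact x.2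
  have hle : Submodule.span ℝ (Set.range (ιMulti ℝ (finrank ℝ V))) ≤
      Submodule.span ℝ {ιMulti ℝ (finrank ℝ V) ⇑(finBasis ℝ V)} := by
    rw [Submodule.span_le]
    rintro _ ⟨v, rfl⟩
    rw [key v]
    exact Submodule.smul_mem _ _ (Submodule.subset_span rfl)
  obtain ⟨c, hc⟩ := Submodule.mem_span_singleton.mp (hle hx)
  refine ⟨c, Subtype.ext ?_⟩
  rw [SetLike.val_smul]
  exact hc.symm

end SESWedgeAux

/-- Graded commutativity of the short-exact-sequence isomorphisms for a commutative
`3 × 3` grid with exact rows and columns: combining via columns then the middle row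
equals combining via rows then the middle column, up to the Koszul sign
`(-1)^{dim V_BL · dim V_TR}` coming from the graded swap `R` of the middle factors. -/
theorem sesWedge_three_by_three
    {TL TM TR CL CM CR BL BM BR : Type*}
    [AddCommGroup TL] [Module ℝ TL] [AddCommGroup TM] [Module ℝ TM]
    [AddCommGroup TR] [Module ℝ TR] [AddCommGroup CL] [Module ℝ CL]
    [AddCommGroup CM] [Module ℝ CM] [AddCommGroup CR] [Module ℝ CR]
    [AddCommGroup BL] [Module ℝ BL] [AddCommGroup BM] [Module ℝ BM]
    [AddCommGroup BR] [Module ℝ BR]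
    [FiniteDimensional ℝ TL] [FiniteDimensional ℝ TM] [FiniteDimensional ℝ TR]
    [FiniteDimensional ℝ CL] [FiniteDimensional ℝ CM] [FiniteDimensional ℝ CR]
    [FiniteDimensional ℝ BL] [FiniteDimensional ℝ BM] [FiniteDimensional ℝ BR]
    -- the row maps
    (aT : TL →ₗ[ℝ] TM) (bT : TM →ₗ[ℝ] TR)
    (aC : CL →ₗ[ℝ] CM) (bC : CM →ₗ[ℝ] CR)
    (aB : BL →ₗ[ℝ] BM) (bB : BM →ₗ[ℝ] BR)
    -- the column maps
    (cL : TL →ₗ[ℝ] CL) (dL : CL →ₗ[ℝ] BL)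
    (cM : TM →ₗ[ℝ] CM) (dM : CM →ₗ[ℝ] BM)
    (cR : TR →ₗ[ℝ] CR) (dR : CR →ₗ[ℝ] BR)
    -- the three rows are short exact
    (haT : Function.Injective aT) (hbT : Function.Surjective bT)
    (hTex : LinearMap.range aT = LinearMap.ker bT)
    (haC : Function.Injective aC) (hbC : Function.Surjective bC)
    (hCex : LinearMap.range aC = LinearMap.ker bC)
    (haB : Function.Injective aB) (hbB : Function.Surjective bB)
    (hBex : LinearMap.range aB = LinearMap.ker bB)
    -- the three columns are short exact
    (hcL : Function.Injective cL) (hdL : Function.Surjective dL)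
    (hLex : LinearMap.range cL = LinearMap.ker dL)
    (hcM : Function.Injective cM) (hdM : Function.Surjective dM)
    (hMex : LinearMap.range cM = LinearMap.ker dM)
    (hcR : Function.Injective cR) (hdR : Function.Surjective dR)
    (hRex : LinearMap.range cR = LinearMap.ker dR)
    -- the grid commutes
    (hcomm₁ : cM.comp aT = aC.comp cL) (hcomm₂ : cR.comp bT = bC.comp cM)
    (hcomm₃ : dM.comp aC = aB.comp dL) (hcomm₄ : dR.comp bC = bB.comp dM)
    -- additivity of dimensions along the rows and columns
    (hT : finrank ℝ TM = finrank ℝ TL + finrank ℝ TR)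
    (hC : finrank ℝ CM = finrank ℝ CL + finrank ℝ CR)
    (hB : finrank ℝ BM = finrank ℝ BL + finrank ℝ BR)
    (hL : finrank ℝ CL = finrank ℝ TL + finrank ℝ BL)
    (hM : finrank ℝ CM = finrank ℝ TM + finrank ℝ BM)
    (hR : finrank ℝ CR = finrank ℝ TR + finrank ℝ BR)
    -- the six canonical short-exact-sequence isomorphisms
    (ΨT : ((⋀[ℝ]^(finrank ℝ TL) TL) ⊗[ℝ] (⋀[ℝ]^(finrank ℝ TR) TR)) →ₗ[ℝ]
      ⋀[ℝ]^(finrank ℝ TM) TM)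
    (hΨT : IsSESWedge (finrank ℝ TL) (finrank ℝ TR) (finrank ℝ TM) hT aT bT ΨT)
    (ΨC : ((⋀[ℝ]^(finrank ℝ CL) CL) ⊗[ℝ] (⋀[ℝ]^(finrank ℝ CR) CR)) →ₗ[ℝ]
      ⋀[ℝ]^(finrank ℝ CM) CM)
    (hΨC : IsSESWedge (finrank ℝ CL) (finrank ℝ CR) (finrank ℝ CM) hC aC bC ΨC)
    (ΨB : ((⋀[ℝ]^(finrank ℝ BL) BL) ⊗[ℝ] (⋀[ℝ]^(finrank ℝ BR) BR)) →ₗ[ℝ]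
      ⋀[ℝ]^(finrank ℝ BM) BM)
    (hΨB : IsSESWedge (finrank ℝ BL) (finrank ℝ BR) (finrank ℝ BM) hB aB bB ΨB)
    (ΨL : ((⋀[ℝ]^(finrank ℝ TL) TL) ⊗[ℝ] (⋀[ℝ]^(finrank ℝ BL) BL)) →ₗ[ℝ]
      ⋀[ℝ]^(finrank ℝ CL) CL)
    (hΨL : IsSESWedge (finrank ℝ TL) (finrank ℝ BL) (finrank ℝ CL) hL cL dL ΨL)
    (ΨM : ((⋀[ℝ]^(finrank ℝ TM) TM) ⊗[ℝ] (⋀[ℝ]^(finrank ℝ BM) BM)) →ₗ[ℝ]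
      ⋀[ℝ]^(finrank ℝ CM) CM)
    (hΨM : IsSESWedge (finrank ℝ TM) (finrank ℝ BM) (finrank ℝ CM) hM cM dM ΨM)
    (ΨR : ((⋀[ℝ]^(finrank ℝ TR) TR) ⊗[ℝ] (⋀[ℝ]^(finrank ℝ BR) BR)) →ₗ[ℝ]
      ⋀[ℝ]^(finrank ℝ CR) CR)
    (hΨR : IsSESWedge (finrank ℝ TR) (finrank ℝ BR) (finrank ℝ CR) hR cR dR ΨR) :
    ∀ (x : ⋀[ℝ]^(finrank ℝ TL) TL) (y : ⋀[ℝ]^(finrank ℝ BL) BL)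
      (z : ⋀[ℝ]^(finrank ℝ TR) TR) (w : ⋀[ℝ]^(finrank ℝ BR) BR),
      ΨC (ΨL (x ⊗ₜ[ℝ] y) ⊗ₜ[ℝ] ΨR (z ⊗ₜ[ℝ] w)) =
        ((-1 : ℝ) ^ (finrank ℝ BL * finrank ℝ TR)) •
          ΨM (ΨT (x ⊗ₜ[ℝ] z) ⊗ₜ[ℝ] ΨB (y ⊗ₜ[ℝ] w)) := by
  intro x y z w
  classical
  obtain ⟨cx, rfl⟩ := SESWedgeAux.top_wedge_span x
  obtain ⟨cy, rfl⟩ := SESWedgeAux.top_wedge_span y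
  obtain ⟨cz, rfl⟩ := SESWedgeAux.top_wedge_span z
  obtain ⟨cw, rfl⟩ := SESWedgeAux.top_wedge_span w
  set t : Fin (finrank ℝ TL) → TL := ⇑(finBasis ℝ TL) with ht
  set ub : Fin (finrank ℝ BL) → BL := ⇑(finBasis ℝ BL) with hub
  set zb : Fin (finrank ℝ TR) → TR := ⇑(finBasis ℝ TR) with hzb
  set wb : Fin (finrank ℝ BR) → BR := ⇑(finBasis ℝ BR) with hwb
  have lit : LinearIndependent ℝ t := (finBasis ℝ TL).linearIndependent
  have liub : LinearIndependent ℝ ub := (finBasis ℝ BL).linearIndependent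
  have lizb : LinearIndependent ℝ zb := (finBasis ℝ TR).linearIndependent
  have liwb : LinearIndependent ℝ wb := (finBasis ℝ BR).linearIndependent
  -- lifts
  obtain ⟨p, hdLp⟩ : ∃ p : Fin (finrank ℝ BL) → CL, ⇑dL ∘ p = ub :=
    ⟨fun i => surjInv hdL (ub i), funext fun i => surjInv_eq hdL _⟩
  obtain ⟨q, hbTq⟩ : ∃ q : Fin (finrank ℝ TR) → TM, ⇑bT ∘ q = zb :=
    ⟨fun i => surjInv hbT (zb i), funext fun i => surjInv_eq hbT _⟩
  obtain ⟨r, hbBr⟩ : ∃ r : Fin (finrank ℝ BR) → BM, ⇑bB ∘ r = wb :=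
    ⟨fun i => surjInv hbB (wb i), funext fun i => surjInv_eq hbB _⟩
  obtain ⟨s, hdMs⟩ : ∃ s : Fin (finrank ℝ BR) → CM, ⇑dM ∘ s = r :=
    ⟨fun i => surjInv hdM (r i), funext fun i => surjInv_eq hdM _⟩
  have hc1 : ∀ v : TL, cM (aT v) = aC (cL v) := fun v => LinearMap.congr_fun hcomm₁ v
  have hc2 : ∀ v : TM, cR (bT v) = bC (cM v) := fun v => LinearMap.congr_fun hcomm₂ v
  have hc3 : ∀ v : CL, dM (aC v) = aB (dL v) := fun v => LinearMap.congr_fun hcomm₃ v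
  have hc4 : ∀ v : CM, dR (bC v) = bB (dM v) := fun v => LinearMap.congr_fun hcomm₄ v
  -- the key identity for the generators
  have lidLp : LinearIndependent ℝ (⇑dL ∘ p) := by rw [hdLp]; exact liub
  have hdRbCs : ⇑dR ∘ (⇑bC ∘ s) = wb := by
    funext i
    show dR (bC (s i)) = wb i
    rw [hc4 (s i), show dM (s i) = r i from congrFun hdMs i]
    exact congrFun hbBr i
  have lidRbCs : LinearIndependent ℝ (⇑dR ∘ (⇑bC ∘ s)) := by rw [hdRbCs]; exact liwb
  have libTq : LinearIndependent ℝ (⇑bT ∘ q) := by rw [hbTq]; exact lizb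
  have libBr : LinearIndependent ℝ (⇑bB ∘ r) := by rw [hbBr]; exact liwb
  -- Step 1: the left column
  have h1 : ΨL (wedge (finrank ℝ TL) t ⊗ₜ[ℝ] wedge (finrank ℝ BL) ub) =
      wedge (finrank ℝ CL) (Fin.append (⇑cL ∘ t) p ∘ Fin.cast hL) := by
    have := hΨL t p lit lidLp
    rwa [hdLp] at this
  -- Step 2: the right column
  have h2 : ΨR (wedge (finrank ℝ TR) zb ⊗ₜ[ℝ] wedge (finrank ℝ BR) wb) =
      wedge (finrank ℝ CR) (Fin.append (⇑cR ∘ zb) (⇑bC ∘ s) ∘ Fin.cast hR) := by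
    have := hΨR zb (⇑bC ∘ s) lizb lidRbCs
    rwa [hdRbCs] at this
  -- Step 3: the middle row applied to the two column results
  have hbCfam : ⇑bC ∘ (Fin.append (⇑cM ∘ q) s ∘ Fin.cast hR) =
      Fin.append (⇑cR ∘ zb) (⇑bC ∘ s) ∘ Fin.cast hR := by
    show (⇑bC ∘ Fin.append (⇑cM ∘ q) s) ∘ Fin.cast hR = _
    rw [SESWedgeAux.myComp_append, show ⇑bC ∘ (⇑cM ∘ q) = ⇑cR ∘ zb from funext fun i => by
      show bC (cM (q i)) = cR (zb i)
      rw [← hc2 (q i)]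
      exact congrArg cR (congrFun hbTq i)]
  have liCL : LinearIndependent ℝ (Fin.append (⇑cL ∘ t) p ∘ Fin.cast hL) :=
    (SESWedgeAux.li_append hcL hLex lit lidLp).comp _ (Fin.cast_injective hL)
  have liCR : LinearIndependent ℝ (⇑bC ∘ (Fin.append (⇑cM ∘ q) s ∘ Fin.cast hR)) := by
    rw [hbCfam]
    exact (SESWedgeAux.li_append hcR hRex lizb lidRbCs).comp _ (Fin.cast_injective hR)
  have h3 := hΨC (Fin.append (⇑cL ∘ t) p ∘ Fin.cast hL)
    (Fin.append (⇑cM ∘ q) s ∘ Fin.cast hR) liCL liCR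
  rw [hbCfam] at h3
  -- Step 4: the top row
  have h4 : ΨT (wedge (finrank ℝ TL) t ⊗ₜ[ℝ] wedge (finrank ℝ TR) zb) =
      wedge (finrank ℝ TM) (Fin.append (⇑aT ∘ t) q ∘ Fin.cast hT) := by
    have := hΨT t q lit libTq
    rwa [hbTq] at this
  -- Step 5: the bottom row
  have h5 : ΨB (wedge (finrank ℝ BL) ub ⊗ₜ[ℝ] wedge (finrank ℝ BR) wb) =
      wedge (finrank ℝ BM) (Fin.append (⇑aB ∘ ub) r ∘ Fin.cast hB) := by
    have := hΨB ub r liub libBr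
    rwa [hbBr] at this
  -- Step 6: the middle column applied to the two row results
  have hdMfam : ⇑dM ∘ (Fin.append (⇑aC ∘ p) s ∘ Fin.cast hB) =
      Fin.append (⇑aB ∘ ub) r ∘ Fin.cast hB := by
    show (⇑dM ∘ Fin.append (⇑aC ∘ p) s) ∘ Fin.cast hB = _
    rw [SESWedgeAux.myComp_append, hdMs, show ⇑dM ∘ (⇑aC ∘ p) = ⇑aB ∘ ub from
      funext fun i => by
        show dM (aC (p i)) = aB (ub i)
        rw [hc3 (p i)]
        exact congrArg aB (congrFun hdLp i)]
  have liTM : LinearIndependent ℝ (Fin.append (⇑aT ∘ t) q ∘ Fin.cast hT) :=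
    (SESWedgeAux.li_append haT hTex lit libTq).comp _ (Fin.cast_injective hT)
  have liBM : LinearIndependent ℝ (⇑dM ∘ (Fin.append (⇑aC ∘ p) s ∘ Fin.cast hB)) := by
    rw [hdMfam]
    exact (SESWedgeAux.li_append haB hBex liub libBr).comp _ (Fin.cast_injective hB)
  have h6 := hΨM (Fin.append (⇑aT ∘ t) q ∘ Fin.cast hT)
    (Fin.append (⇑aC ∘ p) s ∘ Fin.cast hB) liTM liBM
  rw [hdMfam] at h6
  -- Step 7: the two iterated wedges agree up to the Koszul sign
  have key2 : wedge (finrank ℝ CM)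
        (Fin.append (⇑aC ∘ (Fin.append (⇑cL ∘ t) p ∘ Fin.cast hL))
          (Fin.append (⇑cM ∘ q) s ∘ Fin.cast hR) ∘ Fin.cast hC) =
      ((-1 : ℝ) ^ (finrank ℝ BL * finrank ℝ TR)) • wedge (finrank ℝ CM)
        (Fin.append (⇑cM ∘ (Fin.append (⇑aT ∘ t) q ∘ Fin.cast hT))
          (Fin.append (⇑aC ∘ p) s ∘ Fin.cast hB) ∘ Fin.cast hM) := by
    apply Subtype.ext
    rw [SetLike.val_smul]
    show ExteriorAlgebra.ιMulti ℝ _ _ = _ • ExteriorAlgebra.ιMulti ℝ _ _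
    have eF : ⇑aC ∘ (Fin.append (⇑cL ∘ t) p ∘ Fin.cast hL) =
        Fin.append (⇑aC ∘ (⇑cL ∘ t)) (⇑aC ∘ p) ∘ Fin.cast hL := by
      show (⇑aC ∘ Fin.append (⇑cL ∘ t) p) ∘ Fin.cast hL = _
      rw [SESWedgeAux.myComp_append]
    have eF' : ⇑cM ∘ (Fin.append (⇑aT ∘ t) q ∘ Fin.cast hT) =
        Fin.append (⇑aC ∘ (⇑cL ∘ t)) (⇑cM ∘ q) ∘ Fin.cast hT := by
      show (⇑cM ∘ Fin.append (⇑aT ∘ t) q) ∘ Fin.cast hT = _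
      rw [SESWedgeAux.myComp_append,
        show ⇑cM ∘ (⇑aT ∘ t) = ⇑aC ∘ (⇑cL ∘ t) from funext fun i => hc1 (t i)]
    rw [eF, eF', SESWedgeAux.ιMulti_cast hC, SESWedgeAux.ιMulti_cast hM,
      SESWedgeAux.ιMulti_append, SESWedgeAux.ιMulti_append,
      SESWedgeAux.ιMulti_cast hL, SESWedgeAux.ιMulti_cast hR,
      SESWedgeAux.ιMulti_cast hT, SESWedgeAux.ιMulti_cast hB,
      SESWedgeAux.ιMulti_append, SESWedgeAux.ιMulti_append,
      SESWedgeAux.ιMulti_append, SESWedgeAux.ιMulti_append]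
    rw [mul_assoc, ← mul_assoc (ExteriorAlgebra.ιMulti ℝ (finrank ℝ BL) (⇑aC ∘ p)),
      SESWedgeAux.ιMulti_mul_comm (⇑aC ∘ p) (⇑cM ∘ q), smul_mul_assoc, mul_smul_comm]
    congr 1
    simp only [mul_assoc]
  -- put everything together
  simp only [tmul_smul, ← smul_tmul', map_smul]
  rw [h1, h2, h3, h4, h5, h6, key2]
  simp only [smul_smul]
  congr 1
  ring
end
end

section
/- Let 0 → V_LR → V_CR → V_RR → 0, 0 → V_LL → V_LC → V_LR → 0, 0 → V_LL → V_CC → V_CR → 0, and 0 → V_LC → V_CC → V_RR → 0 be four short exact sequences of finite-dimensional real vector spaces forming a commutative diagram (the maps V_LL → V_CC factor through V_LC, etc.). Then the two resulting isomorphisms λ(V_LL) ⊗ λ(V_LR) ⊗ λ(V_RR) → λ(V_CC), obtained by combining via ∧_{V_LC} ⊗ id then ∧_{V_CC}, or via id ⊗ ∧_{V_CR} then ∧_{V_CC}, coincide. -/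
open Module TensorProduct Function

noncomputable section

lemma comp_fin_append {α β : Type*} {k l : ℕ} (f : α → β) (a : Fin k → α) (b : Fin l → α) :
    f ∘ Fin.append a b = Fin.append (f ∘ a) (f ∘ b) := by
  funext x
  refine Fin.addCases (fun p => ?_) (fun q => ?_) x <;>
    simp [Fin.append_left, Fin.append_right]

lemma append_cast_assoc {α : Type*} {k l m kl lm n : ℕ} (hkl : kl = k + l) (hlm : lm = l + m)
    (h1 : n = kl + m) (h2 : n = k + lm) (a : Fin k → α) (b : Fin l → α) (c : Fin m → α) :
    Fin.append (Fin.append a b ∘ Fin.cast hkl) c ∘ Fin.cast h1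
      = Fin.append a (Fin.append b c ∘ Fin.cast hlm) ∘ Fin.cast h2 := by
  subst hkl hlm h1
  have : Fin.append a b ∘ Fin.cast rfl = Fin.append a b := rfl
  rw [this]
  have : Fin.append b c ∘ Fin.cast rfl = Fin.append b c := rfl
  rw [this]
  have : Fin.append (Fin.append a b) c ∘ Fin.cast (rfl : k + l + m = k + l + m)
      = Fin.append (Fin.append a b) c := rfl
  rw [this, Fin.append_assoc]

lemma li_append {V' V V'' : Type*} [AddCommGroup V'] [Module ℝ V'] [AddCommGroup V]
    [Module ℝ V] [AddCommGroup V''] [Module ℝ V'']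
    (i : V' →ₗ[ℝ] V) (j : V →ₗ[ℝ] V'')
    (hi : Function.Injective i) (hex : LinearMap.range i = LinearMap.ker j)
    {k l : ℕ} {u : Fin k → V'} {v : Fin l → V}
    (hu : LinearIndependent ℝ u) (hv : LinearIndependent ℝ (⇑j ∘ v)) :
    LinearIndependent ℝ (Fin.append (⇑i ∘ u) v) := by
  rw [Fintype.linearIndependent_iff]
  intro g hg
  have hji : ∀ p, j (i (u p)) = 0 := fun p => by
    have : i (u p) ∈ LinearMap.ker j := hex ▸ LinearMap.mem_range_self i (u p)
    exact this
  have hsum : (∑ p : Fin k, g (Fin.castAdd l p) • i (u p))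
      + ∑ q : Fin l, g (Fin.natAdd k q) • v q = 0 := by
    rw [← hg, Fin.sum_univ_add]
    congr 1
    · exact Finset.sum_congr rfl fun p _ => by rw [Fin.append_left]; rfl
    · exact Finset.sum_congr rfl fun q _ => by rw [Fin.append_right]
  have h2 : ∑ q : Fin l, g (Fin.natAdd k q) • j (v q) = 0 := by
    have := congrArg j hsum
    simpa [map_add, map_sum, map_smul, hji] using this
  have hq : ∀ q, g (Fin.natAdd k q) = 0 :=
    Fintype.linearIndependent_iff.1 hv _ (by simpa [Function.comp] using h2)
  have hz : ∑ q : Fin l, g (Fin.natAdd k q) • v q = 0 := by simp [hq]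
  rw [hz, add_zero] at hsum
  have h1 : i (∑ p, g (Fin.castAdd l p) • u p) = 0 := by
    rw [map_sum]; simpa [map_smul] using hsum
  have hp : ∀ p, g (Fin.castAdd l p) = 0 :=
    Fintype.linearIndependent_iff.1 hu _ (hi (by rw [h1, map_zero]))
  intro x
  exact Fin.addCases hp hq x

lemma ιMulti_mem_span_basis {V : Type*} [AddCommGroup V] [Module ℝ V] {n : ℕ}
    (a : Basis (Fin n) ℝ V) (v : Fin n → V) :
    ExteriorAlgebra.ιMulti ℝ n v ∈
      Submodule.span ℝ {ExteriorAlgebra.ιMulti ℝ n (⇑a)} := by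
  classical
  have hv : ExteriorAlgebra.ιMulti ℝ n v
      = (ExteriorAlgebra.ιMulti ℝ n) (fun p => ∑ j, a.repr (v p) j • a j) :=
    congrArg _ (funext fun p => (a.sum_repr (v p)).symm)
  have hexp : (ExteriorAlgebra.ιMulti ℝ n) (fun p => ∑ j, a.repr (v p) j • a j)
      = ∑ r : Fin n → Fin n, (∏ p, a.repr (v p) (r p)) •
          ExteriorAlgebra.ιMulti ℝ n (⇑a ∘ r) := by
    rw [show ((ExteriorAlgebra.ιMulti ℝ n) (fun p => ∑ j, a.repr (v p) j • a j) : _)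
        = (ExteriorAlgebra.ιMulti ℝ n).toMultilinearMap
            (fun p => ∑ j, a.repr (v p) j • a j) from rfl,
      MultilinearMap.map_sum]
    refine Finset.sum_congr rfl fun r _ => ?_
    exact MultilinearMap.map_smul_univ _ _ _
  rw [hv, hexp]
  refine Submodule.sum_mem _ fun r _ => ?_
  by_cases hr : Function.Injective r
  · have hb := Finite.injective_iff_bijective.1 hr
    set σ : Equiv.Perm (Fin n) := Equiv.ofBijective r hb with hσ
    have hco : (⇑a ∘ r) = (⇑a ∘ σ) := rfl
    rw [hco, AlternatingMap.map_perm]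
    refine Submodule.smul_mem _ _ ?_
    rcases Int.units_eq_one_or (Equiv.Perm.sign σ) with h | h <;> rw [h]
    · simpa using Submodule.mem_span_singleton_self _
    · have : ((-1 : ℤˣ) • ExteriorAlgebra.ιMulti ℝ n (⇑a))
          = -(ExteriorAlgebra.ιMulti ℝ n (⇑a)) := by
        rw [Units.neg_smul, one_smul]
      rw [this]
      exact Submodule.neg_mem _ (Submodule.mem_span_singleton_self _)
  · have hr' : ¬ Function.Injective (⇑a ∘ r) := fun h => hr h.of_comp
    rw [AlternatingMap.map_eq_zero_of_not_injective _ _ hr', smul_zero]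
    exact Submodule.zero_mem _

lemma top_exterior_gen {V : Type*} [AddCommGroup V] [Module ℝ V] [FiniteDimensional ℝ V]
    (a : Basis (Fin (finrank ℝ V)) ℝ V) (x : ⋀[ℝ]^(finrank ℝ V) V) :
    ∃ c : ℝ, x = c • wedge (finrank ℝ V) ⇑a := by
  have hmem : (x : ExteriorAlgebra ℝ V) ∈
      Submodule.span ℝ {ExteriorAlgebra.ιMulti ℝ (finrank ℝ V) (⇑a)} := by
    have hle : (⋀[ℝ]^(finrank ℝ V) V : Submodule ℝ (ExteriorAlgebra ℝ V)) ≤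
        Submodule.span ℝ {ExteriorAlgebra.ιMulti ℝ (finrank ℝ V) (⇑a)} := by
      rw [← ExteriorAlgebra.ιMulti_span_fixedDegree]
      exact Submodule.span_le.2 (by rintro _ ⟨v, rfl⟩; exact ιMulti_mem_span_basis a v)
    exact hle x.2
  obtain ⟨c, hc⟩ := Submodule.mem_span_singleton.1 hmem
  refine ⟨c, Subtype.ext ?_⟩
  rw [← hc]
  rfl

/-- Associativity of the short-exact-sequence isomorphisms for four compatible short
exact sequences `0 → V_LR → V_CR → V_RR → 0`, `0 → V_LL → V_LC → V_LR → 0`,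
`0 → V_LL → V_CC → V_CR → 0` and `0 → V_LC → V_CC → V_RR → 0`:  the two composites
`λ(V_LL) ⊗ λ(V_LR) ⊗ λ(V_RR) → λ(V_CC)` coincide. -/
theorem sesWedge_assoc
    {LL LC LR CC CR RR : Type*}
    [AddCommGroup LL] [Module ℝ LL] [AddCommGroup LC] [Module ℝ LC]
    [AddCommGroup LR] [Module ℝ LR] [AddCommGroup CC] [Module ℝ CC]
    [AddCommGroup CR] [Module ℝ CR] [AddCommGroup RR] [Module ℝ RR]
    [FiniteDimensional ℝ LL] [FiniteDimensional ℝ LC] [FiniteDimensional ℝ LR]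
    [FiniteDimensional ℝ CC] [FiniteDimensional ℝ CR] [FiniteDimensional ℝ RR]
    (i₁ : LR →ₗ[ℝ] CR) (j₁ : CR →ₗ[ℝ] RR)
    (i₂ : LL →ₗ[ℝ] LC) (j₂ : LC →ₗ[ℝ] LR)
    (i₃ : LL →ₗ[ℝ] CC) (j₃ : CC →ₗ[ℝ] CR)
    (i₄ : LC →ₗ[ℝ] CC) (j₄ : CC →ₗ[ℝ] RR)
    (hi₁ : Function.Injective i₁) (hj₁ : Function.Surjective j₁)
    (hex₁ : LinearMap.range i₁ = LinearMap.ker j₁)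
    (hi₂ : Function.Injective i₂) (hj₂ : Function.Surjective j₂)
    (hex₂ : LinearMap.range i₂ = LinearMap.ker j₂)
    (hi₃ : Function.Injective i₃) (hj₃ : Function.Surjective j₃)
    (hex₃ : LinearMap.range i₃ = LinearMap.ker j₃)
    (hi₄ : Function.Injective i₄) (hj₄ : Function.Surjective j₄)
    (hex₄ : LinearMap.range i₄ = LinearMap.ker j₄)
    -- the diagram commutes
    (hcomm₁ : i₄.comp i₂ = i₃) (hcomm₂ : j₁.comp j₃ = j₄)
    (hcomm₃ : j₃.comp i₄ = i₁.comp j₂)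
    -- additivity of dimensions
    (h₁ : finrank ℝ CR = finrank ℝ LR + finrank ℝ RR)
    (h₂ : finrank ℝ LC = finrank ℝ LL + finrank ℝ LR)
    (h₃ : finrank ℝ CC = finrank ℝ LL + finrank ℝ CR)
    (h₄ : finrank ℝ CC = finrank ℝ LC + finrank ℝ RR)
    (Φ₁ : ((⋀[ℝ]^(finrank ℝ LR) LR) ⊗[ℝ] (⋀[ℝ]^(finrank ℝ RR) RR)) →ₗ[ℝ]
      ⋀[ℝ]^(finrank ℝ CR) CR)
    (hΦ₁ : IsSESWedge (finrank ℝ LR) (finrank ℝ RR) (finrank ℝ CR) h₁ i₁ j₁ Φ₁)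
    (Φ₂ : ((⋀[ℝ]^(finrank ℝ LL) LL) ⊗[ℝ] (⋀[ℝ]^(finrank ℝ LR) LR)) →ₗ[ℝ]
      ⋀[ℝ]^(finrank ℝ LC) LC)
    (hΦ₂ : IsSESWedge (finrank ℝ LL) (finrank ℝ LR) (finrank ℝ LC) h₂ i₂ j₂ Φ₂)
    (Φ₃ : ((⋀[ℝ]^(finrank ℝ LL) LL) ⊗[ℝ] (⋀[ℝ]^(finrank ℝ CR) CR)) →ₗ[ℝ]
      ⋀[ℝ]^(finrank ℝ CC) CC)
    (hΦ₃ : IsSESWedge (finrank ℝ LL) (finrank ℝ CR) (finrank ℝ CC) h₃ i₃ j₃ Φ₃)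
    (Φ₄ : ((⋀[ℝ]^(finrank ℝ LC) LC) ⊗[ℝ] (⋀[ℝ]^(finrank ℝ RR) RR)) →ₗ[ℝ]
      ⋀[ℝ]^(finrank ℝ CC) CC)
    (hΦ₄ : IsSESWedge (finrank ℝ LC) (finrank ℝ RR) (finrank ℝ CC) h₄ i₄ j₄ Φ₄) :
    ∀ (x : ⋀[ℝ]^(finrank ℝ LL) LL) (u : ⋀[ℝ]^(finrank ℝ LR) LR)
      (r : ⋀[ℝ]^(finrank ℝ RR) RR),
      Φ₄ (Φ₂ (x ⊗ₜ[ℝ] u) ⊗ₜ[ℝ] r) = Φ₃ (x ⊗ₜ[ℝ] Φ₁ (u ⊗ₜ[ℝ] r)) := by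
  intro x u r
  classical
  let a : Basis (Fin (finrank ℝ LL)) ℝ LL := finBasis ℝ LL
  let b : Basis (Fin (finrank ℝ LR)) ℝ LR := finBasis ℝ LR
  let c : Basis (Fin (finrank ℝ RR)) ℝ RR := finBasis ℝ RR
  choose v hv using fun p => hj₂ (b p)
  choose w hw using fun p => hj₄ (c p)
  have hb' : ⇑j₂ ∘ v = ⇑b := funext hv
  have hc' : ⇑j₄ ∘ w = ⇑c := funext hw
  have ha : LinearIndependent ℝ (⇑a) := a.linearIndependent
  have hbli : LinearIndependent ℝ (⇑b) := b.linearIndependent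
  have hcli : LinearIndependent ℝ (⇑c) := c.linearIndependent
  set E : Fin (finrank ℝ LC) → LC := Fin.append (⇑i₂ ∘ ⇑a) v ∘ Fin.cast h₂ with hE
  set W' : Fin (finrank ℝ CR) → CC := Fin.append (⇑i₄ ∘ v) w ∘ Fin.cast h₁ with hW'
  have hEli : LinearIndependent ℝ E :=
    (li_append i₂ j₂ hi₂ hex₂ ha (hb'.symm ▸ hbli)).comp _ (Fin.cast_injective h₂)
  have hj₃w : ⇑j₁ ∘ (⇑j₃ ∘ w) = ⇑c := by
    funext p
    show j₁ (j₃ (w p)) = c p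
    rw [← LinearMap.comp_apply, hcomm₂]
    exact hw p
  have hW'j : ⇑j₃ ∘ W' = Fin.append (⇑i₁ ∘ ⇑b) (⇑j₃ ∘ w) ∘ Fin.cast h₁ := by
    have key : ⇑j₃ ∘ Fin.append (⇑i₄ ∘ v) w = Fin.append (⇑i₁ ∘ ⇑b) (⇑j₃ ∘ w) := by
      have hleft : ⇑j₃ ∘ (⇑i₄ ∘ v) = ⇑i₁ ∘ ⇑b := by
        funext p
        show j₃ (i₄ (v p)) = i₁ (b p)
        rw [← LinearMap.comp_apply, hcomm₃, LinearMap.comp_apply, hv p]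
      rw [comp_fin_append, hleft]
    show (⇑j₃ ∘ Fin.append (⇑i₄ ∘ v) w) ∘ Fin.cast h₁ = _
    rw [key]
  have hW'li : LinearIndependent ℝ (⇑j₃ ∘ W') := by
    rw [hW'j]
    exact (li_append i₁ j₁ hi₁ hex₁ hbli (hj₃w.symm ▸ hcli)).comp _ (Fin.cast_injective h₁)
  have e₂ : Φ₂ (wedge _ ⇑a ⊗ₜ[ℝ] wedge _ ⇑b) = wedge _ E := by
    have h := hΦ₂ ⇑a v ha (hb'.symm ▸ hbli)
    rwa [hb'] at h
  have e₄ : Φ₄ (wedge _ E ⊗ₜ[ℝ] wedge _ ⇑c)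
      = wedge _ (Fin.append (⇑i₄ ∘ E) w ∘ Fin.cast h₄) := by
    have h := hΦ₄ E w hEli (hc'.symm ▸ hcli)
    rwa [hc'] at h
  have e₁ : Φ₁ (wedge _ ⇑b ⊗ₜ[ℝ] wedge _ ⇑c) = wedge _ (⇑j₃ ∘ W') := by
    have h := hΦ₁ ⇑b (⇑j₃ ∘ w) hbli (hj₃w.symm ▸ hcli)
    rw [hj₃w] at h
    rw [h, hW'j]
  have e₃ : Φ₃ (wedge _ ⇑a ⊗ₜ[ℝ] wedge _ (⇑j₃ ∘ W'))
      = wedge _ (Fin.append (⇑i₃ ∘ ⇑a) W' ∘ Fin.cast h₃) := hΦ₃ ⇑a W' ha hW'li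
  have hfam : Fin.append (⇑i₄ ∘ E) w ∘ Fin.cast h₄
      = Fin.append (⇑i₃ ∘ ⇑a) W' ∘ Fin.cast h₃ := by
    have h1 : ⇑i₄ ∘ E = Fin.append (⇑i₃ ∘ ⇑a) (⇑i₄ ∘ v) ∘ Fin.cast h₂ := by
      show (⇑i₄ ∘ Fin.append (⇑i₂ ∘ ⇑a) v) ∘ Fin.cast h₂ = _
      rw [comp_fin_append]
      have : ⇑i₄ ∘ (⇑i₂ ∘ ⇑a) = ⇑i₃ ∘ ⇑a := by
        funext p
        show i₄ (i₂ (a p)) = i₃ (a p)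
        rw [← LinearMap.comp_apply, hcomm₁]
      rw [this]
    rw [h1, hW']
    exact append_cast_assoc h₂ h₁ h₄ h₃ _ _ _
  have main : Φ₄ (Φ₂ (wedge _ ⇑a ⊗ₜ[ℝ] wedge _ ⇑b) ⊗ₜ[ℝ] wedge _ ⇑c)
      = Φ₃ (wedge _ ⇑a ⊗ₜ[ℝ] Φ₁ (wedge _ ⇑b ⊗ₜ[ℝ] wedge _ ⇑c)) := by
    rw [e₂, e₄, e₁, e₃, hfam]
  obtain ⟨cx, hx⟩ := top_exterior_gen a x
  obtain ⟨cu, hu'⟩ := top_exterior_gen b u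
  obtain ⟨cr, hr'⟩ := top_exterior_gen c r
  rw [hx, hu', hr']
  simp only [← smul_tmul', tmul_smul, map_smul, smul_smul]
  rw [main]
  congr 1
  ring
end
end

section
/- For a homomorphism δ : V → W of finite-dimensional real vector spaces, the map I_δ : λ(ker δ) ⊗ λ(coker δ)* → λ(V) ⊗ λ(W)* defined by x ⊗ y* ↦ (-1)^{(dim W − dim coker δ)·dim coker δ} (x ∧_V v) ⊗ (λ(δ)v ∧_W y)*, for any nonzero v ∈ λ(V/ker δ), is a well-defined isomorphism independent of the choice of v and of the representatives x, y. -/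
open Module TensorProduct Function

noncomputable section

namespace DetIsoAux

variable {M : Type*} [AddCommGroup M] [Module ℝ M]

lemma wedge_eq_det_smul {n : ℕ} (e : Basis (Fin n) ℝ M) (v : Fin n → M) :
    wedge n v = e.det v • wedge n e := by
  apply Subtype.ext
  show ExteriorAlgebra.ιMulti ℝ n v = e.det v • ExteriorAlgebra.ιMulti ℝ n e
  rw [← sub_eq_zero, ← Module.forall_dual_apply_eq_zero_iff ℝ]
  intro φ
  have h := AlternatingMap.eq_smul_basis_det e
    (φ.compAlternatingMap (ExteriorAlgebra.ιMulti ℝ n))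
  have hv := congrArg (fun f => f v) h
  have he := congrArg (fun f => f ⇑e) h
  simp only [LinearMap.compAlternatingMap_apply, AlternatingMap.smul_apply,
    Basis.det_self, smul_eq_mul, mul_one] at hv he
  simp only [map_sub, map_smul, hv, smul_eq_mul]
  ring

lemma wedge_basis_ne_zero {n : ℕ} (e : Basis (Fin n) ℝ M) : wedge n e ≠ 0 := by
  classical
  intro h
  have h0 : ExteriorAlgebra.ιMulti ℝ n ⇑e = 0 := by
    exact congrArg Subtype.val h
  set f : ∀ i, M [⋀^Fin i]→ₗ[ℝ] ℝ :=
    Function.update (fun i => (0 : M [⋀^Fin i]→ₗ[ℝ] ℝ)) n e.det with hf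
  have h1 : ExteriorAlgebra.liftAlternating f (ExteriorAlgebra.ιMulti ℝ n ⇑e) = f n ⇑e :=
    ExteriorAlgebra.liftAlternating_apply_ιMulti f ⇑e
  rw [h0, map_zero] at h1
  have h2 : f n = e.det := by rw [hf]; simp
  rw [h2, Basis.det_self] at h1
  exact one_ne_zero h1.symm

lemma exists_wedge_smul {n : ℕ} (e : Basis (Fin n) ℝ M) (x : ⋀[ℝ]^n M) :
    ∃ c : ℝ, x = c • wedge n e := by
  have hx : (x : ExteriorAlgebra ℝ M) ∈
      Submodule.span ℝ {ExteriorAlgebra.ιMulti ℝ n ⇑e} := by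
    have hx0 : (x : ExteriorAlgebra ℝ M) ∈
        Submodule.span ℝ (Set.range (ExteriorAlgebra.ιMulti ℝ n (M := M))) := by
      rw [ExteriorAlgebra.ιMulti_span_fixedDegree]
      exact x.2
    refine Submodule.span_le.2 ?_ hx0
    rintro _ ⟨v, rfl⟩
    have := wedge_eq_det_smul e v
    have hcoe : ExteriorAlgebra.ιMulti ℝ n v =
        e.det v • ExteriorAlgebra.ιMulti ℝ n ⇑e := congrArg Subtype.val this
    rw [hcoe]
    exact Submodule.smul_mem _ _ (Submodule.mem_span_singleton_self _)
  rw [Submodule.mem_span_singleton] at hx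
  obtain ⟨c, hc⟩ := hx
  exact ⟨c, Subtype.ext hc.symm⟩

lemma exists_basis_of_li [FiniteDimensional ℝ M]
    (v : Fin (finrank ℝ M) → M) (hv : LinearIndependent ℝ v) :
    ∃ b : Basis (Fin (finrank ℝ M)) ℝ M, ⇑b = v := by
  rcases Nat.eq_zero_or_pos (finrank ℝ M) with h | h
  · refine ⟨h ▸ Module.finBasis ℝ M, funext fun i => ?_⟩
    exact absurd i.2 (by omega)
  · haveI : Nonempty (Fin (finrank ℝ M)) := Fin.pos_iff_nonempty.1 h
    exact ⟨basisOfLinearIndependentOfCardEqFinrank hv (Fintype.card_fin _),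
      coe_basisOfLinearIndependentOfCardEqFinrank hv _⟩

lemma li_append (P : Submodule ℝ M) {k l : ℕ} (v' : Fin k → P) (v : Fin l → M)
    (h1 : LinearIndependent ℝ v') (h2 : LinearIndependent ℝ (⇑P.mkQ ∘ v)) :
    LinearIndependent ℝ (Fin.append (⇑P.subtype ∘ v') v) := by
  have hA : LinearIndependent ℝ (⇑P.subtype ∘ v') := h1.map' P.subtype (Submodule.ker_subtype P)
  have hB : LinearIndependent ℝ v := h2.of_comp P.mkQ
  have hdisj : Disjoint (Submodule.span ℝ (Set.range (⇑P.subtype ∘ v')))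
      (Submodule.span ℝ (Set.range v)) := by
    rw [Submodule.disjoint_def]
    intro w hw1 hw2
    have hwP : w ∈ P := by
      have : Submodule.span ℝ (Set.range (⇑P.subtype ∘ v')) ≤ P := by
        rw [Submodule.span_le]
        rintro _ ⟨i, rfl⟩
        exact (v' i).2
      exact this hw1
    rw [Submodule.mem_span_range_iff_exists_fun] at hw2
    obtain ⟨c, hc⟩ := hw2
    have h0 : ∑ i, c i • (⇑P.mkQ ∘ v) i = 0 := by
      have : P.mkQ w = 0 := by
        rw [← Submodule.Quotient.mk_eq_zero P] at hwP
        exact hwP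
      rw [← hc] at this
      simpa [map_sum, map_smul] using this
    have hc0 : ∀ i, c i = 0 := Fintype.linearIndependent_iff.1 h2 c h0
    rw [← hc]
    simp [hc0]
  have hli : LinearIndependent ℝ (Sum.elim (⇑P.subtype ∘ v') v) := hA.sum_type hB hdisj
  have hcomp := hli.comp ⇑finSumFinEquiv.symm finSumFinEquiv.symm.injective
  have heq : Sum.elim (⇑P.subtype ∘ v') v ∘ ⇑finSumFinEquiv.symm =
      Fin.append (⇑P.subtype ∘ v') v := by
    funext x
    obtain ⟨s, rfl⟩ := finSumFinEquiv.surjective x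
    rw [Function.comp_apply, Equiv.symm_apply_apply]
    cases s with
    | inl i => simp [Fin.append_left]
    | inr i => simp [Fin.append_right]
  rwa [heq] at hcomp

end DetIsoAux

set_option maxHeartbeats 2000000 in
/-- For a homomorphism `δ : V → W` of finite-dimensional real vector spaces, the map
`I_δ : λ(ker δ) ⊗ λ(coker δ)* → λ(V) ⊗ λ(W)*`,
`x ⊗ y* ↦ (-1)^{(dim W − dim coker δ)·dim coker δ} (x ∧_V v) ⊗ (λ(δ)v ∧_W y)*`,
is a well-defined isomorphism independent of the choice of a nonzero
`v ∈ λ(V/ker δ)` and of the dual representatives. -/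
theorem exists_detIso_of_hom
    {V W : Type*} [AddCommGroup V] [Module ℝ V] [AddCommGroup W] [Module ℝ W]
    [FiniteDimensional ℝ V] [FiniteDimensional ℝ W]
    (δ : V →ₗ[ℝ] W)
    (h₁ : finrank ℝ V = finrank ℝ (LinearMap.ker δ) + finrank ℝ (V ⧸ LinearMap.ker δ))
    (h₂ : finrank ℝ W =
      finrank ℝ (V ⧸ LinearMap.ker δ) + finrank ℝ (W ⧸ LinearMap.range δ))
    (ΦV : ((⋀[ℝ]^(finrank ℝ (LinearMap.ker δ)) (LinearMap.ker δ)) ⊗[ℝ]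
        (⋀[ℝ]^(finrank ℝ (V ⧸ LinearMap.ker δ)) (V ⧸ LinearMap.ker δ))) →ₗ[ℝ]
      ⋀[ℝ]^(finrank ℝ V) V)
    (hΦV : IsSESWedge (finrank ℝ (LinearMap.ker δ)) (finrank ℝ (V ⧸ LinearMap.ker δ))
      (finrank ℝ V) h₁ (LinearMap.ker δ).subtype (LinearMap.ker δ).mkQ ΦV)
    (ΦW : ((⋀[ℝ]^(finrank ℝ (V ⧸ LinearMap.ker δ)) (LinearMap.range δ)) ⊗[ℝ]
        (⋀[ℝ]^(finrank ℝ (W ⧸ LinearMap.range δ)) (W ⧸ LinearMap.range δ))) →ₗ[ℝ]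
      ⋀[ℝ]^(finrank ℝ W) W)
    (hΦW : IsSESWedge (finrank ℝ (V ⧸ LinearMap.ker δ))
      (finrank ℝ (W ⧸ LinearMap.range δ)) (finrank ℝ W) h₂
      (LinearMap.range δ).subtype (LinearMap.range δ).mkQ ΦW)
    (Lδ : (⋀[ℝ]^(finrank ℝ (V ⧸ LinearMap.ker δ)) (V ⧸ LinearMap.ker δ)) →ₗ[ℝ]
      ⋀[ℝ]^(finrank ℝ (V ⧸ LinearMap.ker δ)) (LinearMap.range δ))
    (hLδ : ∀ u : Fin (finrank ℝ (V ⧸ LinearMap.ker δ)) → (V ⧸ LinearMap.ker δ),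
      Lδ (wedge _ u) = wedge _ (⇑δ.quotKerEquivRange ∘ u)) :
    ∃ I : ((⋀[ℝ]^(finrank ℝ (LinearMap.ker δ)) (LinearMap.ker δ)) ⊗[ℝ]
        Module.Dual ℝ
          (⋀[ℝ]^(finrank ℝ (W ⧸ LinearMap.range δ)) (W ⧸ LinearMap.range δ))) ≃ₗ[ℝ]
      ((⋀[ℝ]^(finrank ℝ V) V) ⊗[ℝ] Module.Dual ℝ (⋀[ℝ]^(finrank ℝ W) W)),
      ∀ (x : ⋀[ℝ]^(finrank ℝ (LinearMap.ker δ)) (LinearMap.ker δ))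
        (y : ⋀[ℝ]^(finrank ℝ (W ⧸ LinearMap.range δ)) (W ⧸ LinearMap.range δ))
        (yd : Module.Dual ℝ
          (⋀[ℝ]^(finrank ℝ (W ⧸ LinearMap.range δ)) (W ⧸ LinearMap.range δ)))
        (v : ⋀[ℝ]^(finrank ℝ (V ⧸ LinearMap.ker δ)) (V ⧸ LinearMap.ker δ))
        (wd : Module.Dual ℝ (⋀[ℝ]^(finrank ℝ W) W)),
        v ≠ 0 → yd y = 1 → wd (ΦW (Lδ v ⊗ₜ[ℝ] y)) = 1 →
          I (x ⊗ₜ[ℝ] yd) =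
            ((-1 : ℝ) ^ ((finrank ℝ W - finrank ℝ (W ⧸ LinearMap.range δ)) *
                finrank ℝ (W ⧸ LinearMap.range δ))) •
              (ΦV (x ⊗ₜ[ℝ] v) ⊗ₜ[ℝ] wd) := by
  classical
  obtain ⟨bk⟩ : Nonempty (Basis (Fin (finrank ℝ (LinearMap.ker δ))) ℝ (LinearMap.ker δ)) :=
    ⟨Module.finBasis ℝ _⟩
  obtain ⟨bq⟩ : Nonempty (Basis (Fin (finrank ℝ (V ⧸ LinearMap.ker δ))) ℝ
      (V ⧸ LinearMap.ker δ)) := ⟨Module.finBasis ℝ _⟩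
  obtain ⟨bc⟩ : Nonempty (Basis (Fin (finrank ℝ (W ⧸ LinearMap.range δ))) ℝ
      (W ⧸ LinearMap.range δ)) := ⟨Module.finBasis ℝ _⟩
  set vlift : Fin (finrank ℝ (V ⧸ LinearMap.ker δ)) → V :=
    Function.surjInv (Submodule.mkQ_surjective _) ∘ ⇑bq with hvliftdef
  have hvlift : ⇑(LinearMap.ker δ).mkQ ∘ vlift = ⇑bq :=
    funext fun i => Function.surjInv_eq _ _
  set wlift : Fin (finrank ℝ (W ⧸ LinearMap.range δ)) → W :=
    Function.surjInv (Submodule.mkQ_surjective _) ∘ ⇑bc with hwliftdef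
  have hwlift : ⇑(LinearMap.range δ).mkQ ∘ wlift = ⇑bc :=
    funext fun i => Function.surjInv_eq _ _
  -- V side
  have hqli : LinearIndependent ℝ (⇑(LinearMap.ker δ).mkQ ∘ vlift) := by
    rw [hvlift]; exact bq.linearIndependent
  have h1 := hΦV ⇑bk vlift bk.linearIndependent hqli
  rw [hvlift] at h1
  have hfVli : LinearIndependent ℝ
      (Fin.append (⇑(LinearMap.ker δ).subtype ∘ ⇑bk) vlift ∘ Fin.cast h₁) :=
    (DetIsoAux.li_append _ ⇑bk vlift bk.linearIndependent hqli).comp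
      (Fin.cast h₁) (Fin.cast_injective h₁)
  obtain ⟨eV, heV⟩ := DetIsoAux.exists_basis_of_li _ hfVli
  have hxv : ΦV (wedge _ ⇑bk ⊗ₜ[ℝ] wedge _ ⇑bq) = wedge _ ⇑eV := by
    rw [h1, heV]
  -- W side
  have hbq' : LinearIndependent ℝ (⇑δ.quotKerEquivRange ∘ ⇑bq) :=
    bq.linearIndependent.map' δ.quotKerEquivRange.toLinearMap δ.quotKerEquivRange.ker
  have hcli : LinearIndependent ℝ (⇑(LinearMap.range δ).mkQ ∘ wlift) := by
    rw [hwlift]; exact bc.linearIndependent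
  have h2 := hΦW (⇑δ.quotKerEquivRange ∘ ⇑bq) wlift hbq' hcli
  rw [hwlift] at h2
  have hLv : Lδ (wedge _ ⇑bq) = wedge _ (⇑δ.quotKerEquivRange ∘ ⇑bq) := hLδ ⇑bq
  have hfWli : LinearIndependent ℝ
      (Fin.append (⇑(LinearMap.range δ).subtype ∘ (⇑δ.quotKerEquivRange ∘ ⇑bq)) wlift ∘
        Fin.cast h₂) :=
    (DetIsoAux.li_append _ (⇑δ.quotKerEquivRange ∘ ⇑bq) wlift hbq' hcli).comp
      (Fin.cast h₂) (Fin.cast_injective h₂)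
  obtain ⟨eW, heW⟩ := DetIsoAux.exists_basis_of_li _ hfWli
  have hw0 : ΦW (Lδ (wedge _ ⇑bq) ⊗ₜ[ℝ] wedge _ ⇑bc) = wedge _ ⇑eW := by
    rw [hLv, h2, heW]
  -- the two linear maps
  set ε := ((-1 : ℝ) ^ ((finrank ℝ W - finrank ℝ (W ⧸ LinearMap.range δ)) *
      finrank ℝ (W ⧸ LinearMap.range δ))) with hεdef
  have hε : ε ≠ 0 := by rw [hεdef]; exact pow_ne_zero _ (by norm_num)
  set A := ε • (ΦV ∘ₗ (TensorProduct.mk ℝ _ _).flip (wedge _ ⇑bq)) with hAdef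
  have hAapp : ∀ x, A x = ε • ΦV (x ⊗ₜ[ℝ] wedge _ ⇑bq) := fun x => rfl
  have hAbij : Function.Bijective A := by
    constructor
    · rw [injective_iff_map_eq_zero]
      intro x hx
      obtain ⟨a, rfl⟩ := DetIsoAux.exists_wedge_smul bk x
      rw [map_smul, hAapp, hxv, smul_smul] at hx
      by_cases ha : a = 0
      · rw [ha, zero_smul]
      · exfalso
        apply DetIsoAux.wedge_basis_ne_zero eV
        have h' : ((a * ε)⁻¹ * (a * ε)) • wedge _ ⇑eV = 0 := by
          rw [mul_smul, hx, smul_zero]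
        rwa [inv_mul_cancel₀ (mul_ne_zero ha hε), one_smul] at h'
    · intro z
      obtain ⟨a, rfl⟩ := DetIsoAux.exists_wedge_smul eV z
      refine ⟨(ε⁻¹ * a) • wedge _ ⇑bk, ?_⟩
      rw [map_smul, hAapp, hxv, smul_smul]
      congr 1
      field_simp
  set B := ΦW ∘ₗ TensorProduct.mk ℝ _ _ (Lδ (wedge _ ⇑bq)) with hBdef
  have hBapp : ∀ y, B y = ΦW (Lδ (wedge _ ⇑bq) ⊗ₜ[ℝ] y) := fun y => rfl
  have hBbij : Function.Bijective B := by
    constructor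
    · rw [injective_iff_map_eq_zero]
      intro y hy
      obtain ⟨a, rfl⟩ := DetIsoAux.exists_wedge_smul bc y
      rw [map_smul, hBapp, hw0] at hy
      by_cases ha : a = 0
      · rw [ha, zero_smul]
      · exfalso
        apply DetIsoAux.wedge_basis_ne_zero eW
        have h' : (a⁻¹ * a) • wedge _ ⇑eW = 0 := by rw [mul_smul, hy, smul_zero]
        rwa [inv_mul_cancel₀ ha, one_smul] at h'
    · intro z
      obtain ⟨a, rfl⟩ := DetIsoAux.exists_wedge_smul eW z
      exact ⟨a • wedge _ ⇑bc, by rw [map_smul, hBapp, hw0]⟩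
  set Aeq := LinearEquiv.ofBijective A hAbij with hAeqdef
  set Beq := LinearEquiv.ofBijective B hBbij with hBeqdef
  refine ⟨TensorProduct.congr Aeq Beq.symm.dualMap, ?_⟩
  intro x y yd v wd hv hyd hwd
  obtain ⟨c, rfl⟩ := DetIsoAux.exists_wedge_smul bq v
  obtain ⟨d, rfl⟩ := DetIsoAux.exists_wedge_smul bc y
  have hyd' : d * yd (wedge _ ⇑bc) = 1 := by
    rw [map_smul, smul_eq_mul] at hyd; exact hyd
  have hwd' : (c * d) * wd (ΦW (Lδ (wedge _ ⇑bq) ⊗ₜ[ℝ] wedge _ ⇑bc)) = 1 := by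
    rw [map_smul, smul_tmul_smul, map_smul, map_smul, smul_eq_mul] at hwd
    exact hwd
  have hd : d ≠ 0 := left_ne_zero_of_mul_eq_one hyd'
  have hval : yd (wedge _ ⇑bc) =
      c * wd (ΦW (Lδ (wedge _ ⇑bq) ⊗ₜ[ℝ] wedge _ ⇑bc)) := by
    have e1 : yd (wedge _ ⇑bc) = d⁻¹ := eq_inv_of_mul_eq_one_right hyd'
    have e2 : c * wd (ΦW (Lδ (wedge _ ⇑bq) ⊗ₜ[ℝ] wedge _ ⇑bc)) = d⁻¹ := by
      apply eq_inv_of_mul_eq_one_right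
      calc d * (c * wd (ΦW (Lδ (wedge _ ⇑bq) ⊗ₜ[ℝ] wedge _ ⇑bc)))
          = (c * d) * wd (ΦW (Lδ (wedge _ ⇑bq) ⊗ₜ[ℝ] wedge _ ⇑bc)) := by ring
        _ = 1 := hwd'
    rw [e1, e2]
  have hBy : Beq (wedge _ ⇑bc) = ΦW (Lδ (wedge _ ⇑bq) ⊗ₜ[ℝ] wedge _ ⇑bc) := rfl
  have hsymm : Beq.symm (ΦW (Lδ (wedge _ ⇑bq) ⊗ₜ[ℝ] wedge _ ⇑bc)) = wedge _ ⇑bc := by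
    rw [LinearEquiv.symm_apply_eq, hBy]
  have hT : Beq.symm.dualMap yd = c • wd := by
    apply LinearMap.ext
    intro z
    obtain ⟨a, rfl⟩ := DetIsoAux.exists_wedge_smul eW z
    rw [map_smul, map_smul]
    congr 1
    rw [LinearEquiv.dualMap_apply, ← hw0, hsymm, LinearMap.smul_apply, smul_eq_mul]
    exact hval
  rw [TensorProduct.congr_tmul, hT]
  have hAx : Aeq x = ε • ΦV (x ⊗ₜ[ℝ] wedge _ ⇑bq) := rfl
  have hrhs : ΦV (x ⊗ₜ[ℝ] (c • wedge _ ⇑bq)) = c • ΦV (x ⊗ₜ[ℝ] wedge _ ⇑bq) := by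
    rw [tmul_smul, map_smul]
  rw [hAx, hrhs, tmul_smul, smul_tmul', smul_tmul', smul_smul, smul_smul, mul_comm]
end
end
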